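/- arXiv:2308.08000 — 7 statements merged into one kernel-verified Lean document; each statement's English description precedes it below -/
import Mathlib

section
/- For every ε ∈ (0,1) there exists δ > 0 with the following property: for all integers 0 ≤ j < k ≤ q, if there exists a point x ∈ Ω with −δ ≤ u_j(x) ≤ 0 and −δ ≤ u_k(x) ≤ 0, then ⟨N_j, N_k⟩ ≤ ε. -/
/-!
If `⟪N j, N k⟫ > ε ≥ 0`, the acute-angle assumption says that the facets `{u j = 0}` and
`{u k = 0}` do not meet in `Ω`, so the continuous function `max |u j| |u k|` is positive on the
compact set `Ω` and hence bounded below there by some `a > 0`; any `δ < a` then excludes points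
of `Ω` that are `δ`-close to both facets. There are finitely many pairs `j < k ≤ q`, so one `δ`
works for all of them.
-/

open scoped RealInnerProductSpace Topology

open Filter Set

theorem IsCompact.eventually_lt_max_abs {X : Type*} [TopologicalSpace X] {K : Set X}
    (hK : IsCompact K) {f g : X → ℝ} (hf : ContinuousOn f K) (hg : ContinuousOn g K)
    (hfg : ∀ x ∈ K, f x = 0 → g x ≠ 0) :
    ∀ᶠ δ in 𝓝 (0 : ℝ), ∀ x ∈ K, δ < max |f x| |g x| := by
  have hpos : ∀ x ∈ K, 0 < max |f x| |g x| := fun x hx => by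
    by_cases hfx : f x = 0
    · exact lt_max_of_lt_right (abs_pos.2 (hfg x hx hfx))
    · exact lt_max_of_lt_left (abs_pos.2 hfx)
  obtain ⟨a, ha, hle⟩ := hK.exists_forall_le' ((hf.abs).sup (hg.abs)) hpos
  filter_upwards [gt_mem_nhds ha] with δ hδ x hx using hδ.trans_le (hle x hx)

theorem stmt_0_general (n q : ℕ)
    (u : ℕ → EuclideanSpace ℝ (Fin n) → ℝ)
    (N : ℕ → EuclideanSpace ℝ (Fin n)) (c : ℕ → ℝ)
    (hu : ∀ k ≤ q, ∀ x, u k x = ⟪N k, x⟫ + c k)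
    (Ω : Set (EuclideanSpace ℝ (Fin n)))
    (hcomp : IsCompact Ω)
    (hB : ∀ j k, j < k → k ≤ q → (∃ x ∈ Ω, u j x = 0 ∧ u k x = 0) →
      ⟪N j, N k⟫ ≤ 0) :
    ∀ ε : ℝ, 0 < ε → ε < 1 → ∃ δ > 0, ∀ j k, j < k → k ≤ q →
      (∃ x ∈ Ω, -δ ≤ u j x ∧ u j x ≤ 0 ∧ -δ ≤ u k x ∧ u k x ≤ 0) →
      ⟪N j, N k⟫ ≤ ε := by
  intro ε hε _
  have hcont : ∀ k ≤ q, ContinuousOn (u k) Ω := fun k hk => by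
    rw [funext (hu k hk)]
    fun_prop
  set pairs : Set (ℕ × ℕ) := {p | p.1 < p.2 ∧ p.2 ≤ q}
  have hfin : pairs.Finite :=
    ((finite_Iic q).prod (finite_Iic q)).subset fun p hp => ⟨(hp.1.trans_le hp.2).le, hp.2⟩
  have hpair : ∀ p ∈ pairs, ∀ᶠ δ in 𝓝 (0 : ℝ),
      (∃ x ∈ Ω, -δ ≤ u p.1 x ∧ u p.1 x ≤ 0 ∧ -δ ≤ u p.2 x ∧ u p.2 x ≤ 0) →
      ⟪N p.1, N p.2⟫ ≤ ε := by
    rintro ⟨j, k⟩ ⟨hjk, hkq⟩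
    by_cases hle : ⟪N j, N k⟫ ≤ ε
    · exact .of_forall fun _ _ => hle
    have hdisjoint : ∀ x ∈ Ω, u j x = 0 → u k x ≠ 0 := fun x hx hj hk =>
      hle ((hB j k hjk hkq ⟨x, hx, hj, hk⟩).trans hε.le)
    filter_upwards [hcomp.eventually_lt_max_abs (hcont j (hjk.trans_le hkq).le) (hcont k hkq)
      hdisjoint] with δ hδ
    rintro ⟨x, hx, hj₁, hj₂, hk₁, hk₂⟩
    have := hδ x hx
    rw [abs_of_nonpos hj₂, abs_of_nonpos hk₂] at this
    exact absurd this (not_lt.2 (max_le (by linarith) (by linarith)))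
  obtain ⟨δ, hall, hδ⟩ :=
    ((eventually_nhdsWithin_of_eventually_nhds (hfin.eventually_all.2 hpair)).and
      (self_mem_nhdsWithin : Ioi (0 : ℝ) ∈ 𝓝[>] 0)).exists
  exact ⟨δ, hδ, fun j k hjk hkq => hall (j, k) ⟨hjk, hkq⟩⟩

theorem stmt_0 (n q : ℕ) (hn : 3 ≤ n) (hq : 1 ≤ q)
    (u : ℕ → EuclideanSpace ℝ (Fin n) → ℝ)
    (N : ℕ → EuclideanSpace ℝ (Fin n)) (c : ℕ → ℝ)
    (hN : ∀ k ≤ q, ‖N k‖ = 1)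
    (hu : ∀ k ≤ q, ∀ x, u k x = ⟪N k, x⟫ + c k)
    (Ω : Set (EuclideanSpace ℝ (Fin n)))
    (hΩ : Ω = {x | ∀ m ≤ q, u m x ≤ 0})
    (hcomp : IsCompact Ω) (hint : (interior Ω).Nonempty)
    (hA : ∀ k ≤ q, ∃ x, 0 < u k x ∧ ∀ m ≤ q, m ≠ k → u m x ≤ 0)
    (hB : ∀ j k, j < k → k ≤ q → (∃ x ∈ Ω, u j x = 0 ∧ u k x = 0) →
      ⟪N j, N k⟫ ≤ 0) :
    ∀ ε : ℝ, 0 < ε → ε < 1 → ∃ δ > 0, ∀ j k, j < k → k ≤ q →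
      (∃ x ∈ Ω, -δ ≤ u j x ∧ u j x ≤ 0 ∧ -δ ≤ u k x ∧ u k x ≤ 0) →
      ⟪N j, N k⟫ ≤ ε :=
  stmt_0_general n q u N c hu Ω hcomp hB
end

section
/- There exists a constant Λ > 1 with the following property: for every point x ∈ Ω and all nonnegative real numbers a_0, …, a_q such that a_i = 0 for every 0 ≤ i ≤ q with u_i(x) ≤ −2Λ^{−1}, one has Σ_{i=0}^q a_i ≤ Λ · |Σ_{i=0}^q a_i N_i|, where |·| is the Euclidean norm. -/
/-!
Fix a point `y` in the interior of `Ω`, so that `u i y ≤ -δ < 0` for all `i`, and let `D` bound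
`‖x - y‖` on the compact set `Ω`. Pairing `v = ∑ aᵢ Nᵢ` with `x - y` gives
`∑ aᵢ (u i x - u i y) = ⟪v, x - y⟫ ≤ D ‖v‖`, while the support condition makes every active
`u i x` at least `-2/Λ`, so the left side is at least `(δ - 2/Λ) ∑ aᵢ`. Taking `Λ δ ≥ 2 + D` makes
`δ - 2/Λ ≥ D/Λ`, whence `∑ aᵢ ≤ Λ ‖v‖`.
-/

open scoped RealInnerProductSpace

theorem exists_pos_forall_le_neg_of_forall_neg {ι : Type*} (s : Finset ι) {f : ι → ℝ}
    (hf : ∀ i ∈ s, f i < 0) : ∃ δ > 0, ∀ i ∈ s, f i ≤ -δ := by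
  rcases s.eq_empty_or_nonempty with rfl | hs
  · exact ⟨1, one_pos, by simp⟩
  obtain ⟨i₀, hi₀, hmin⟩ := s.exists_min_image (fun i => -f i) hs
  exact ⟨-f i₀, neg_pos.mpr (hf i₀ hi₀), fun i hi => le_neg.mp (hmin i hi)⟩

section

variable {E : Type*} [NormedAddCommGroup E] [InnerProductSpace ℝ E]

theorem lt_zero_of_mem_interior_of_forall_le_zero {Ω : Set E} {u : E → ℝ} {N y : E} {c : ℝ}
    (hN : N ≠ 0) (hu : ∀ x, u x = ⟪N, x⟫ + c) (hΩ : ∀ x ∈ Ω, u x ≤ 0) (hy : y ∈ interior Ω) :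
    u y < 0 := by
  obtain ⟨t, ht, hmem⟩ : ∃ t : ℝ, 0 < t ∧ y + t • N ∈ Ω := by
    have hline : Filter.Tendsto (fun t : ℝ => y + t • N) (nhds 0) (nhds y) :=
      (continuous_const.add (continuous_id.smul continuous_const)).tendsto' 0 y (by simp)
    have hev := (hline.eventually (mem_interior_iff_mem_nhds.mp hy)).filter_mono
      (nhdsWithin_le_nhds (s := Set.Ioi 0))
    exact (hev.and self_mem_nhdsWithin).exists.imp fun t h => ⟨h.2, h.1⟩
  have hle := hΩ _ hmem
  rw [hu, inner_add_right, real_inner_smul_right] at hle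
  rw [hu]
  nlinarith [real_inner_self_pos.2 hN]

theorem mul_sum_le_norm_sub_mul_norm_sum_smul {ι : Type*} (s : Finset ι) (u : ι → E → ℝ)
    (N : ι → E) (a : ι → ℝ) {x y : E} {δ ε : ℝ}
    (hu : ∀ i ∈ s, u i x - u i y = ⟪N i, x - y⟫) (ha : ∀ i ∈ s, 0 ≤ a i)
    (hy : ∀ i ∈ s, u i y ≤ -δ) (hx : ∀ i ∈ s, a i ≠ 0 → -ε ≤ u i x) :
    (δ - ε) * ∑ i ∈ s, a i ≤ ‖x - y‖ * ‖∑ i ∈ s, a i • N i‖ := by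
  have hterm : ∀ i ∈ s, (δ - ε) * a i ≤ a i * (u i x - u i y) := fun i hi => by
    rcases eq_or_ne (a i) 0 with h0 | h0
    · simp [h0]
    · nlinarith [ha i hi, hy i hi, hx i hi h0]
  calc (δ - ε) * ∑ i ∈ s, a i
      ≤ ∑ i ∈ s, a i * (u i x - u i y) := by
        rw [Finset.mul_sum]; exact Finset.sum_le_sum hterm
    _ = ⟪∑ i ∈ s, a i • N i, x - y⟫ := by
        rw [sum_inner]
        exact Finset.sum_congr rfl fun i hi => by rw [hu i hi, real_inner_smul_left]
    _ ≤ ‖∑ i ∈ s, a i • N i‖ * ‖x - y‖ := real_inner_le_norm _ _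
    _ = ‖x - y‖ * ‖∑ i ∈ s, a i • N i‖ := mul_comm _ _

end

theorem stmt_1_general (n q : ℕ)
    (u : ℕ → EuclideanSpace ℝ (Fin n) → ℝ)
    (N : ℕ → EuclideanSpace ℝ (Fin n)) (c : ℕ → ℝ)
    (hN : ∀ k ≤ q, ‖N k‖ = 1)
    (hu : ∀ k ≤ q, ∀ x, u k x = ⟪N k, x⟫ + c k)
    (Ω : Set (EuclideanSpace ℝ (Fin n)))
    (hΩ : Ω = {x | ∀ m ≤ q, u m x ≤ 0})
    (hcomp : IsCompact Ω) (hint : (interior Ω).Nonempty) :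
    ∃ Λ : ℝ, 1 < Λ ∧ ∀ x ∈ Ω, ∀ a : ℕ → ℝ,
      (∀ i ≤ q, 0 ≤ a i) →
      (∀ i ≤ q, u i x ≤ -2 * Λ⁻¹ → a i = 0) →
      ∑ i ∈ Finset.range (q + 1), a i ≤
        Λ * ‖∑ i ∈ Finset.range (q + 1), a i • N i‖ := by
  have hrange : ∀ i ∈ Finset.range (q + 1), i ≤ q := fun i hi => Finset.mem_range_succ_iff.mp hi
  obtain ⟨y, hy⟩ := hint
  obtain ⟨δ, hδ, hyδ⟩ := exists_pos_forall_le_neg_of_forall_neg (Finset.range (q + 1))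
    (f := fun i => u i y) fun i hi =>
      lt_zero_of_mem_interior_of_forall_le_zero
        (norm_ne_zero_iff.mp (by simp [hN i (hrange i hi)])) (hu i (hrange i hi)) (fun x hx => (hΩ ▸ hx) i (hrange i hi)) hy
  obtain ⟨D, hD, hΩD⟩ := hcomp.isBounded.subset_closedBall_lt 0 y
  set Λ := max 2 ((2 + D) / δ)
  have hΛ : 0 < Λ := lt_of_lt_of_le two_pos (le_max_left _ _)
  have hΛδ : 2 + D ≤ Λ * δ := (div_le_iff₀ hδ).mp (le_max_right _ _)
  refine ⟨Λ, lt_of_lt_of_le one_lt_two (le_max_left _ _), fun x hx a ha hsupp => ?_⟩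
  have key := mul_sum_le_norm_sub_mul_norm_sum_smul (Finset.range (q + 1)) u N a
    (x := x) (y := y) (δ := δ) (ε := 2 * Λ⁻¹)
    (fun i hi => by rw [hu i (hrange i hi), hu i (hrange i hi), inner_sub_right]; ring)
    (fun i hi => ha i (hrange i hi)) hyδ
    (fun i hi h0 => by simpa using le_of_lt (not_le.mp (mt (hsupp i (hrange i hi)) h0)))
  have hxy : ‖x - y‖ ≤ D := by simpa [dist_eq_norm] using hΩD hx
  have hsum : 0 ≤ ∑ i ∈ Finset.range (q + 1), a i :=
    Finset.sum_nonneg fun i hi => ha i (hrange i hi)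
  have hgap : D ≤ Λ * (δ - 2 * Λ⁻¹) := by
    rw [mul_sub, mul_left_comm, mul_inv_cancel₀ hΛ.ne']; linarith
  have := mul_le_mul_of_nonneg_right hxy (norm_nonneg (∑ i ∈ Finset.range (q + 1), a i • N i))
  nlinarith [mul_le_mul_of_nonneg_right hgap hsum]

theorem stmt_1 (n q : ℕ) (hn : 3 ≤ n) (hq : 1 ≤ q)
    (u : ℕ → EuclideanSpace ℝ (Fin n) → ℝ)
    (N : ℕ → EuclideanSpace ℝ (Fin n)) (c : ℕ → ℝ)
    (hN : ∀ k ≤ q, ‖N k‖ = 1)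
    (hu : ∀ k ≤ q, ∀ x, u k x = ⟪N k, x⟫ + c k)
    (Ω : Set (EuclideanSpace ℝ (Fin n)))
    (hΩ : Ω = {x | ∀ m ≤ q, u m x ≤ 0})
    (hcomp : IsCompact Ω) (hint : (interior Ω).Nonempty)
    (hA : ∀ k ≤ q, ∃ x, 0 < u k x ∧ ∀ m ≤ q, m ≠ k → u m x ≤ 0)
    (hB : ∀ j k, j < k → k ≤ q → (∃ x ∈ Ω, u j x = 0 ∧ u k x = 0) →
      ⟪N j, N k⟫ ≤ 0) :
    ∃ Λ : ℝ, 1 < Λ ∧ ∀ x ∈ Ω, ∀ a : ℕ → ℝ,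
      (∀ i ≤ q, 0 ≤ a i) →
      (∀ i ≤ q, u i x ≤ -2 * Λ⁻¹ → a i = 0) →
      ∑ i ∈ Finset.range (q + 1), a i ≤
        Λ * ‖∑ i ∈ Finset.range (q + 1), a i • N i‖ :=
  stmt_1_general n q u N c hN hu Ω hΩ hcomp hint
end

section
/- There exists a constant Ξ > 1 with the following property: for every integer 1 ≤ k ≤ q, every point x ∈ Ω with −2Ξ^{−1} ≤ u_k(x) ≤ 0, and all nonnegative real numbers a_0, …, a_{k−1} such that a_i = 0 for every 0 ≤ i ≤ k−1 with u_i(x) ≤ −2Ξ^{−1}, one has Σ_{i=0}^{k−1} a_i ≤ Ξ · |(Σ_{i=0}^{k−1} a_i N_i) ∧ N_k|. -/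
/-!
Fix an interior point `y` of `Ω`, so that `u_m(y) ≤ -δ` for all `m`, and let `v = ∑ a_i N_i`.
Two faces that do not meet in `Ω` stay a positive distance apart on the compact `Ω`, so once `Ξ`
is large, any two faces near `x` do meet, and Assumption B gives `⟪v, N_k⟫ ≤ 0`. Moreover
`⟪v, y - x⟫ ≤ -(δ/2) ∑ a_i` and `⟪N_k, y - x⟫ ≤ 0`, so dropping the non-positive `N_k`-component
of `v` can only decrease `⟪v, y - x⟫`. Hence the component of `v` orthogonal to `N_k`, of length
`|v ∧ N_k|`, is at least `(δ/2) ∑ a_i / r` long, where `Ω` lies in the ball of radius `r` about `y`.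
-/

open scoped RealInnerProductSpace
open Filter Topology Metric Finset

noncomputable def wedgeNorm {E : Type*} [NormedAddCommGroup E] [InnerProductSpace ℝ E]
    (v w : E) : ℝ :=
  Real.sqrt (‖v‖ ^ 2 * ‖w‖ ^ 2 - ⟪v, w⟫ ^ 2)

theorem IsCompact.eventually_forall_lt_neg {X : Type*} [TopologicalSpace X] {K : Set X}
    {f : X → ℝ} (hK : IsCompact K) (hf : Continuous f) (hneg : ∀ x ∈ K, f x < 0) :
    ∀ᶠ ε in 𝓝 (0 : ℝ), ∀ x ∈ K, f x < -ε :=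
  hK.eventually_forall_of_forall_eventually fun x hx =>
    (hf.comp continuous_snd).continuousAt.eventually_lt continuous_fst.neg.continuousAt
      (by simpa using hneg x hx)

section InnerProductSpace

variable {E : Type*} [NormedAddCommGroup E] [InnerProductSpace ℝ E]

theorem wedgeNorm_nonneg (v w : E) : 0 ≤ wedgeNorm v w :=
  Real.sqrt_nonneg _

theorem wedgeNorm_eq_norm_sub {v e : E} (he : ‖e‖ = 1) :
    wedgeNorm v e = ‖v - ⟪v, e⟫ • e‖ := by
  rw [wedgeNorm, ← Real.sqrt_sq (norm_nonneg (v - _)), norm_sub_sq_real, real_inner_smul_right,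
    norm_smul, he, Real.norm_eq_abs, real_inner_comm e v, one_pow, mul_one, mul_one, sq_abs]
  ring_nf

theorem neg_inner_le_mul_wedgeNorm {v e w : E} {D : ℝ} (he : ‖e‖ = 1) (hve : ⟪v, e⟫ ≤ 0)
    (hew : ⟪e, w⟫ ≤ 0) (hw : ‖w‖ ≤ D) : -⟪v, w⟫ ≤ D * wedgeNorm v e := by
  rw [wedgeNorm_eq_norm_sub he]
  calc -⟪v, w⟫ ≤ -⟪v - ⟪v, e⟫ • e, w⟫ := by
        rw [inner_sub_left, real_inner_smul_left]
        nlinarith [mul_nonneg_of_nonpos_of_nonpos hve hew]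
    _ ≤ ‖v - ⟪v, e⟫ • e‖ * ‖w‖ := (neg_le_abs _).trans (abs_real_inner_le_norm _ _)
    _ ≤ D * ‖v - ⟪v, e⟫ • e‖ := by
        rw [mul_comm]
        exact mul_le_mul_of_nonneg_right hw (norm_nonneg _)

theorem mul_sum_le_mul_wedgeNorm_sum {ι : Type*} {s : Finset ι} {a : ι → ℝ} {N : ι → E}
    {e w : E} {m D : ℝ} (he : ‖e‖ = 1) (hew : ⟪e, w⟫ ≤ 0) (hw : ‖w‖ ≤ D)
    (ha : ∀ i ∈ s, 0 ≤ a i) (hsupp : ∀ i ∈ s, a i ≠ 0 → ⟪N i, e⟫ ≤ 0 ∧ ⟪N i, w⟫ ≤ -m) :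
    m * ∑ i ∈ s, a i ≤ D * wedgeNorm (∑ i ∈ s, a i • N i) e := by
  refine le_trans ?_ (neg_inner_le_mul_wedgeNorm he ?_ hew hw)
  · rw [sum_inner, mul_sum, ← sum_neg_distrib]
    refine sum_le_sum fun i hi => ?_
    rw [real_inner_smul_left]
    rcases eq_or_ne (a i) 0 with h | h
    · simp [h]
    · nlinarith [ha i hi, (hsupp i hi h).2]
  · rw [sum_inner]
    refine sum_nonpos fun i hi => ?_
    rw [real_inner_smul_left]
    rcases eq_or_ne (a i) 0 with h | h
    · simp [h]
    · exact mul_nonpos_of_nonneg_of_nonpos (ha i hi) (hsupp i hi h).1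

theorem inner_add_le_neg_of_closedBall_subset {N y : E} {c δ : ℝ} (hN : ‖N‖ = 1) (hδ : 0 ≤ δ)
    (h : closedBall y δ ⊆ {x | ⟪N, x⟫ + c ≤ 0}) : ⟪N, y⟫ + c ≤ -δ := by
  have hmem : y + δ • N ∈ {x | ⟪N, x⟫ + c ≤ 0} := h (by simp [norm_smul, hN, abs_of_nonneg hδ])
  simp only [Set.mem_ofPred_eq, inner_add_right, real_inner_smul_right,
    real_inner_self_eq_norm_sq, hN] at hmem
  linarith

variable {q : ℕ} {u : ℕ → E → ℝ} {N : ℕ → E} {c : ℕ → ℝ} {Ω : Set E}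

theorem exists_pos_forall_le_neg_of_mem_interior (hN : ∀ k ≤ q, ‖N k‖ = 1)
    (hu : ∀ k ≤ q, ∀ x, u k x = ⟪N k, x⟫ + c k) (hΩ : Ω = {x | ∀ m ≤ q, u m x ≤ 0}) {y : E}
    (hy : y ∈ interior Ω) : ∃ δ > 0, ∀ m ≤ q, u m y ≤ -δ := by
  obtain ⟨δ, hδ, hball⟩ := nhds_basis_closedBall.mem_iff.1 (mem_interior_iff_mem_nhds.1 hy)
  refine ⟨δ, hδ, fun m hm => hu m hm y ▸ ?_⟩
  refine inner_add_le_neg_of_closedBall_subset (hN m hm) hδ.le fun x hx => ?_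
  have hxΩ := hball hx
  rw [hΩ] at hxΩ
  rw [Set.mem_ofPred_eq, ← hu m hm x]
  exact hxΩ m hm

theorem eventually_inner_nonpos_of_near_faces (hu : ∀ k ≤ q, ∀ x, u k x = ⟪N k, x⟫ + c k)
    (hΩ : Ω = {x | ∀ m ≤ q, u m x ≤ 0}) (hcomp : IsCompact Ω)
    (hB : ∀ j k, j < k → k ≤ q → (∃ x ∈ Ω, u j x = 0 ∧ u k x = 0) → ⟪N j, N k⟫ ≤ 0) :
    ∀ᶠ ε in 𝓝 (0 : ℝ), ∀ k ≤ q, ∀ j < k, ∀ x ∈ Ω, -ε ≤ u j x → -ε ≤ u k x →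
      ⟪N j, N k⟫ ≤ 0 := by
  have hcont : ∀ k ≤ q, Continuous (u k) := fun k hk => by
    rw [funext (hu k hk)]
    fun_prop
  refine (Set.finite_Iic q).eventually_all.2 fun k (hk : k ≤ q) =>
    (Set.finite_Iio k).eventually_all.2 fun j (hj : j < k) => ?_
  by_cases hzero : ∃ x ∈ Ω, u j x = 0 ∧ u k x = 0
  · exact Eventually.of_forall fun _ _ _ _ _ => hB j k hj hk hzero
  simp only [not_exists, not_and] at hzero
  have hneg : ∀ x ∈ Ω, min (u j x) (u k x) < 0 := by
    intro x hx
    have hxΩ := hx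
    rw [hΩ] at hxΩ
    rcases (hxΩ j (hj.le.trans hk)).lt_or_eq with h | h
    · exact min_lt_of_left_lt h
    · exact min_lt_of_right_lt ((hxΩ k hk).lt_of_ne (hzero x hx h))
  filter_upwards [hcomp.eventually_forall_lt_neg
    ((hcont j (hj.le.trans hk)).min (hcont k hk)) hneg] with ε hε x hx hjx hkx
  exact absurd (hε x hx) (not_lt.2 (le_min hjx hkx))

theorem mul_sum_le_mul_wedgeNorm_of_near_faces (hN : ∀ k ≤ q, ‖N k‖ = 1)
    (hu : ∀ k ≤ q, ∀ x, u k x = ⟪N k, x⟫ + c k) {k : ℕ} (hkq : k ≤ q) {x y : E} {δ ε r : ℝ}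
    (hyδ : ∀ m ≤ q, u m y ≤ -δ) (hδ : 0 ≤ δ) (hεδ : ε ≤ δ / 2) (hxy : ‖y - x‖ ≤ r)
    (hacute : ∀ j < k, -ε ≤ u j x → ⟪N j, N k⟫ ≤ 0) (hkx : -ε ≤ u k x) {a : ℕ → ℝ}
    (ha : ∀ i < k, 0 ≤ a i) (hactive : ∀ i < k, a i ≠ 0 → -ε ≤ u i x) :
    δ / 2 * ∑ i ∈ range k, a i ≤ r * wedgeNorm (∑ i ∈ range k, a i • N i) (N k) := by
  have hinner : ∀ m ≤ q, ⟪N m, y - x⟫ = u m y - u m x := fun m hm => by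
    rw [inner_sub_right, hu m hm, hu m hm]
    ring
  refine mul_sum_le_mul_wedgeNorm_sum (hN k hkq) ?_ hxy (fun i hi => ha i (mem_range.1 hi))
    fun i hi hai => ?_
  · rw [hinner k hkq]
    linarith [hyδ k hkq]
  · have hik := mem_range.1 hi
    have hiq := hik.le.trans hkq
    refine ⟨hacute i hik (hactive i hik hai), ?_⟩
    rw [hinner i hiq]
    linarith [hyδ i hiq, hactive i hik hai]

end InnerProductSpace

theorem stmt_2_general (n q : ℕ)
    (u : ℕ → EuclideanSpace ℝ (Fin n) → ℝ)
    (N : ℕ → EuclideanSpace ℝ (Fin n)) (c : ℕ → ℝ)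
    (hN : ∀ k ≤ q, ‖N k‖ = 1)
    (hu : ∀ k ≤ q, ∀ x, u k x = ⟪N k, x⟫ + c k)
    (Ω : Set (EuclideanSpace ℝ (Fin n)))
    (hΩ : Ω = {x | ∀ m ≤ q, u m x ≤ 0})
    (hcomp : IsCompact Ω) (hint : (interior Ω).Nonempty)
    (hB : ∀ j k, j < k → k ≤ q → (∃ x ∈ Ω, u j x = 0 ∧ u k x = 0) →
      ⟪N j, N k⟫ ≤ 0) :
    ∃ Ξ : ℝ, 1 < Ξ ∧ ∀ k, 1 ≤ k → k ≤ q → ∀ x ∈ Ω,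
      -2 * Ξ⁻¹ ≤ u k x → u k x ≤ 0 → ∀ a : ℕ → ℝ,
      (∀ i < k, 0 ≤ a i) →
      (∀ i < k, u i x ≤ -2 * Ξ⁻¹ → a i = 0) →
      ∑ i ∈ Finset.range k, a i ≤
        Ξ * Real.sqrt (‖∑ i ∈ Finset.range k, a i • N i‖ ^ 2 * ‖N k‖ ^ 2 -
          ⟪∑ i ∈ Finset.range k, a i • N i, N k⟫ ^ 2) := by
  obtain ⟨y, hy⟩ := hint
  obtain ⟨δ, hδ, hyδ⟩ := exists_pos_forall_le_neg_of_mem_interior hN hu hΩ hy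
  obtain ⟨r, hr⟩ := hcomp.isBounded.subset_closedBall y
  have hsmall : ∀ᶠ ε in 𝓝[>] (0 : ℝ), ε ∈ Set.Ioo 0 (min (δ / 2) 1) :=
    Ioo_mem_nhdsGT (lt_min (half_pos hδ) one_pos)
  obtain ⟨ε, ⟨hε, hεδ⟩, hacute⟩ := (hsmall.and ((eventually_inner_nonpos_of_near_faces
    hu hΩ hcomp hB).filter_mono nhdsWithin_le_nhds)).exists
  set Ξ := max (2 / ε) (2 * r / δ)
  have hΞε : 2 / ε ≤ Ξ := le_max_left _ _
  have hΞ : 0 < Ξ := (div_pos two_pos hε).trans_le hΞε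
  have hεΞ : 2 * Ξ⁻¹ ≤ ε := by
    rw [← div_eq_mul_inv, div_le_iff₀ hΞ]
    rw [div_le_iff₀ hε] at hΞε
    linarith
  have hε1 : ε < 1 := hεδ.trans_le (min_le_right _ _)
  refine ⟨Ξ, ((one_lt_div hε).2 (by linarith)).trans_le hΞε,
    fun k _ hkq x hx hukx _ a ha hsupp => ?_⟩
  have hactive : ∀ i < k, a i ≠ 0 → -ε ≤ u i x := fun i hi hai => by
    by_contra h
    exact hai (hsupp i hi (by linarith))
  have key := mul_sum_le_mul_wedgeNorm_of_near_faces (r := r) hN hu hkq hyδ hδ.le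
    (hεδ.le.trans (min_le_left _ _)) (by rw [← dist_eq_norm]; exact mem_closedBall'.1 (hr hx))
    (fun j hj hjx => hacute k hkq j hj x hx hjx (by linarith)) (by linarith) ha hactive
  have hsum : ∑ i ∈ range k, a i ≤ 2 * r / δ * wedgeNorm (∑ i ∈ range k, a i • N i) (N k) := by
    rw [div_mul_eq_mul_div, le_div_iff₀ hδ]
    linarith
  exact hsum.trans (mul_le_mul_of_nonneg_right (le_max_right _ _) (wedgeNorm_nonneg _ _))

theorem stmt_2 (n q : ℕ) (hn : 3 ≤ n) (hq : 1 ≤ q)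
    (u : ℕ → EuclideanSpace ℝ (Fin n) → ℝ)
    (N : ℕ → EuclideanSpace ℝ (Fin n)) (c : ℕ → ℝ)
    (hN : ∀ k ≤ q, ‖N k‖ = 1)
    (hu : ∀ k ≤ q, ∀ x, u k x = ⟪N k, x⟫ + c k)
    (Ω : Set (EuclideanSpace ℝ (Fin n)))
    (hΩ : Ω = {x | ∀ m ≤ q, u m x ≤ 0})
    (hcomp : IsCompact Ω) (hint : (interior Ω).Nonempty)
    (hA : ∀ k ≤ q, ∃ x, 0 < u k x ∧ ∀ m ≤ q, m ≠ k → u m x ≤ 0)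
    (hB : ∀ j k, j < k → k ≤ q → (∃ x ∈ Ω, u j x = 0 ∧ u k x = 0) →
      ⟪N j, N k⟫ ≤ 0) :
    ∃ Ξ : ℝ, 1 < Ξ ∧ ∀ k, 1 ≤ k → k ≤ q → ∀ x ∈ Ω,
      -2 * Ξ⁻¹ ≤ u k x → u k x ≤ 0 → ∀ a : ℕ → ℝ,
      (∀ i < k, 0 ≤ a i) →
      (∀ i < k, u i x ≤ -2 * Ξ⁻¹ → a i = 0) →
      ∑ i ∈ Finset.range k, a i ≤
        Ξ * Real.sqrt (‖∑ i ∈ Finset.range k, a i • N i‖ ^ 2 * ‖N k‖ ^ 2 -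
          ⟪∑ i ∈ Finset.range k, a i • N i, N k⟫ ^ 2) :=
  stmt_2_general n q u N c hN hu Ω hΩ hcomp hint hB
end

section
/- There exists a constant C > 0, independent of γ and λ_0 (C may depend on n, q and η), such that for every 0 ≤ k ≤ q: the function û_k is smooth and convex on ℝ^n, its Euclidean gradient satisfies |∇û_k| ≤ C at every point of ℝ^n, and its Hessian satisfies ‖D²û_k‖ ≤ C λ_k at every point of ℝ^n (where λ_0 is used when k = 0). -/
open scoped RealInnerProductSpace

set_option linter.unusedSectionVars false
set_option maxHeartbeats 1000000

section Eta
variable {η : ℝ → ℝ} (hs : ContDiff ℝ (⊤ : ℕ∞) η)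
  (heven : ∀ t, η (-t) = η t)
  (hconv : ∀ t, 0 ≤ iteratedDeriv 2 η t)
  (habs : ∀ t : ℝ, 1 / 2 ≤ |t| → η t = |t|)

include hs habs in
lemma eta_deriv_pos {t : ℝ} (ht : 1 / 2 < t) : deriv η t = 1 := by
  have h : η =ᶠ[nhds t] id := by
    refine Filter.eventuallyEq_of_mem (isOpen_Ioi.mem_nhds ht) (fun s hs' => ?_)
    have hs'' : (1:ℝ)/2 < s := hs'
    rw [habs s (by rw [abs_of_pos (by linarith)]; linarith), abs_of_pos (by linarith)]
    rfl
  rw [h.deriv_eq, deriv_id]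

include heven in
lemma eta_deriv_odd (t : ℝ) : deriv η (-t) = - deriv η t := by
  have h : deriv η t = deriv (fun s => η (-s)) t := by
    congr 1; funext s; rw [heven]
  rw [h, deriv_comp_neg]; ring

include hconv in
lemma eta_deriv2_nonneg (t : ℝ) : 0 ≤ deriv (deriv η) t := by
  have := hconv t
  rwa [iteratedDeriv_succ, iteratedDeriv_one] at this

include hs in
lemma eta_deriv_smooth : ContDiff ℝ (⊤ : ℕ∞) (deriv η) := by
  have h : ContDiff ℝ (((⊤ : ℕ∞) : WithTop ℕ∞) + 1) η := hs.of_le (by rfl)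
  exact (contDiff_succ_iff_deriv.mp h).2.2

include hs hconv in
lemma eta_deriv_mono : Monotone (deriv η) :=
  monotone_of_deriv_nonneg ((eta_deriv_smooth hs).differentiable (by simp))
    (eta_deriv2_nonneg hconv)

include hs heven hconv habs in
lemma eta_deriv_le_one (t : ℝ) : |deriv η t| ≤ 1 := by
  have hmono := eta_deriv_mono hs hconv
  have h1 : ∀ s : ℝ, deriv η s ≤ 1 := by
    intro s
    have h := hmono (le_max_left s 1)
    rwa [eta_deriv_pos hs habs (by linarith [le_max_right s 1] : (1:ℝ)/2 < max s 1)] at h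
  have h2 : -1 ≤ deriv η t := by
    have h3 := h1 (-t)
    rw [eta_deriv_odd heven] at h3
    linarith
  rw [abs_le]; exact ⟨h2, h1 t⟩

include hs heven habs in
lemma eta_deriv2_zero {t : ℝ} (ht : 1 ≤ |t|) : deriv (deriv η) t = 0 := by
  rcases le_abs.mp ht with h | h
  · have h' : deriv η =ᶠ[nhds t] (fun _ => (1:ℝ)) := by
      refine Filter.eventuallyEq_of_mem (isOpen_Ioi.mem_nhds (by linarith : (1:ℝ)/2 < t)) (fun s hs' => ?_)
      exact eta_deriv_pos hs habs hs'
    rw [h'.deriv_eq, deriv_const]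
  · have h' : deriv η =ᶠ[nhds t] (fun _ => (-1:ℝ)) := by
      refine Filter.eventuallyEq_of_mem (isOpen_Iio.mem_nhds (by linarith : t < -(1/2:ℝ))) (fun s hs' => ?_)
      have hs'' : s < -(1/2:ℝ) := hs'
      have hodd : deriv η (-(-s)) = - deriv η (-s) := eta_deriv_odd heven (-s)
      rw [neg_neg] at hodd
      rw [hodd, eta_deriv_pos hs habs (by linarith : (1:ℝ)/2 < -s)]
    rw [h'.deriv_eq, deriv_const]

include hs heven habs in
lemma eta_deriv2_bound : ∃ M : ℝ, 0 ≤ M ∧ ∀ t, |deriv (deriv η) t| ≤ M := by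
  have hcont : ContinuousOn (deriv (deriv η)) (Set.Icc (-1:ℝ) 1) :=
    ((eta_deriv_smooth (eta_deriv_smooth hs)).continuous).continuousOn
  obtain ⟨M0, hM0⟩ := (isCompact_Icc (a := (-1:ℝ)) (b := 1)).exists_bound_of_continuousOn hcont
  refine ⟨max M0 0, le_max_right _ _, fun t => ?_⟩
  by_cases ht : |t| ≤ 1
  · have := hM0 t (abs_le.mp ht |> fun h => Set.mem_Icc.mpr h)
    calc |deriv (deriv η) t| = ‖deriv (deriv η) t‖ := rfl
      _ ≤ M0 := this
      _ ≤ max M0 0 := le_max_left _ _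
  · rw [eta_deriv2_zero hs heven habs (le_of_lt (not_le.mp ht)), abs_zero]
    exact le_max_right _ _

end Eta

section Step

variable {E : Type*} [NormedAddCommGroup E] [InnerProductSpace ℝ E]

lemma affine_hasFDerivAt (v : E) (cc : ℝ) (x : E) :
    HasFDerivAt (fun y : E => ⟪v, y⟫ + cc) (innerSL ℝ v) x :=
  ((innerSL ℝ v).hasFDerivAt).add_const cc

lemma affine_contDiff (v : E) (cc : ℝ) :
    ContDiff ℝ (⊤ : ℕ∞) (fun y : E => ⟪v, y⟫ + cc) :=
  (innerSL ℝ v).contDiff.add contDiff_const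

/-- The main step lemma. -/
lemma step_lemma {η : ℝ → ℝ} (hηs : ContDiff ℝ (⊤ : ℕ∞) η)
    (hd1 : ∀ t, |deriv η t| ≤ 1)
    (hd2 : ∀ t, 0 ≤ deriv (deriv η) t)
    {M : ℝ} (hM0 : 0 ≤ M) (hMb : ∀ t, |deriv (deriv η) t| ≤ M)
    (f : E → ℝ) (hf : ContDiff ℝ (⊤ : ℕ∞) f) (hfc : ConvexOn ℝ Set.univ f)
    (v : E) (hv : ‖v‖ = 1) (cc : ℝ) {lam : ℝ} (hlam : 0 < lam)
    {B : ℝ} (hB0 : 0 ≤ B) (hB : ∀ x, ‖fderiv ℝ f x‖ ≤ B)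
    {H : ℝ} (hH : ∀ x, ‖fderiv ℝ (fderiv ℝ f) x‖ ≤ H) :
    ContDiff ℝ (⊤ : ℕ∞) (fun x => (1/2 : ℝ) * (f x + (⟪v, x⟫ + cc) +
        lam⁻¹ * η (lam * (f x - (⟪v, x⟫ + cc))))) ∧
    ConvexOn ℝ Set.univ (fun x => (1/2 : ℝ) * (f x + (⟪v, x⟫ + cc) +
        lam⁻¹ * η (lam * (f x - (⟪v, x⟫ + cc))))) ∧
    (∀ x, ‖fderiv ℝ (fun x => (1/2 : ℝ) * (f x + (⟪v, x⟫ + cc) +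
        lam⁻¹ * η (lam * (f x - (⟪v, x⟫ + cc))))) x‖ ≤ B + 1) ∧
    (∀ x, ‖fderiv ℝ (fderiv ℝ (fun x => (1/2 : ℝ) * (f x + (⟪v, x⟫ + cc) +
        lam⁻¹ * η (lam * (f x - (⟪v, x⟫ + cc))))) ) x‖ ≤ H + (1/2) * lam * M * (B+1)^2) := by
  set g : E → ℝ := fun y => ⟪v, y⟫ + cc with hg
  set F : E → ℝ := fun x => (1/2 : ℝ) * (f x + g x + lam⁻¹ * η (lam * (f x - g x))) with hF
  have hgs : ContDiff ℝ (⊤ : ℕ∞) g := affine_contDiff v cc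
  have hFs : ContDiff ℝ (⊤ : ℕ∞) F :=
    contDiff_const.mul (((hf.add hgs)).add (contDiff_const.mul
      (hηs.comp (contDiff_const.mul (hf.sub hgs)))))
  -- gradient computation
  set e : E → ℝ := fun x => deriv η (lam * (f x - g x)) with he
  set G : E → (E →L[ℝ] ℝ) := fun x =>
    (1/2 : ℝ) • ((fderiv ℝ f x + innerSL ℝ v) + e x • (fderiv ℝ f x - innerSL ℝ v)) with hG
  have hFG : ∀ x, HasFDerivAt F (G x) x := by
    intro x
    have hDfx : HasFDerivAt f (fderiv ℝ f x) x := (hf.differentiable (by simp) x).hasFDerivAt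
    have hgx : HasFDerivAt g (innerSL ℝ v) x := affine_hasFDerivAt v cc x
    have hwx : HasFDerivAt (fun y => f y - g y) (fderiv ℝ f x - innerSL ℝ v) x := hDfx.sub hgx
    have hlwx : HasFDerivAt (fun y => lam * (f y - g y))
        (lam • (fderiv ℝ f x - innerSL ℝ v)) x := hwx.const_mul lam
    have hηx : HasDerivAt η (deriv η (lam * (f x - g x))) (lam * (f x - g x)) :=
      (hηs.differentiable (by simp) _).hasDerivAt
    have hcx : HasFDerivAt (fun y => η (lam * (f y - g y)))
        (e x • (lam • (fderiv ℝ f x - innerSL ℝ v))) x := hηx.comp_hasFDerivAt x hlwx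
    have h1 := ((hDfx.add hgx).add (hcx.const_mul lam⁻¹)).const_mul (1/2 : ℝ)
    have heq : (1/2 : ℝ) • ((fderiv ℝ f x + innerSL ℝ v) +
        lam⁻¹ • (e x • (lam • (fderiv ℝ f x - innerSL ℝ v)))) = G x := by
      have hln : lam ≠ 0 := ne_of_gt hlam
      rw [hG]
      congr 1
      congr 1
      rw [smul_smul, smul_smul]
      congr 1
      field_simp
    rw [← heq]
    exact h1
  have hDF : fderiv ℝ F = G := funext (fun x => (hFG x).fderiv)
  have hd1' : ∀ t, deriv η t ≤ 1 := fun t => (abs_le.mp (hd1 t)).2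
  have hd1'' : ∀ t, -1 ≤ deriv η t := fun t => (abs_le.mp (hd1 t)).1
  -- convexity
  have hηconv : ConvexOn ℝ Set.univ η := by
    refine convexOn_univ_of_deriv2_nonneg (hηs.differentiable (by simp))
      ((eta_deriv_smooth hηs).differentiable (by simp)) (fun x => ?_)
    have : deriv^[2] η x = deriv (deriv η) x := by
      simp [Function.iterate_succ, Function.iterate_zero]
    rw [this]; exact hd2 x
  have hmono : ∀ b : ℝ, Monotone (fun a : ℝ => (1/2 : ℝ) * (a + b + lam⁻¹ * η (lam * (a - b)))) := by
    intro b
    refine monotone_of_deriv_nonneg ?_ ?_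
    · intro a
      have h1 : HasDerivAt (fun a : ℝ => lam * (a - b)) lam a := by
        simpa using ((hasDerivAt_id' a).sub_const b).const_mul lam
      have h2 : HasDerivAt (fun a : ℝ => η (lam * (a - b)))
          (deriv η (lam * (a - b)) * lam) a :=
        ((hηs.differentiable (by simp) _).hasDerivAt).comp a h1
      have h3 := (((hasDerivAt_id' a).add_const b).add (h2.const_mul lam⁻¹)).const_mul (1/2 : ℝ)
      exact h3.differentiableAt
    · intro a
      have h1 : HasDerivAt (fun a : ℝ => lam * (a - b)) lam a := by
        simpa using ((hasDerivAt_id' a).sub_const b).const_mul lam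
      have h2 : HasDerivAt (fun a : ℝ => η (lam * (a - b)))
          (deriv η (lam * (a - b)) * lam) a :=
        ((hηs.differentiable (by simp) _).hasDerivAt).comp a h1
      have h3 := (((hasDerivAt_id' a).add_const b).add (h2.const_mul lam⁻¹)).const_mul (1/2 : ℝ)
      rw [(show HasDerivAt (fun a : ℝ => (1/2 : ℝ) * (a + b + lam⁻¹ * η (lam * (a - b)))) _ a from h3).deriv]
      have := hd1'' (lam * (a - b))
      have hl : lam⁻¹ * (deriv η (lam * (a - b)) * lam) = deriv η (lam * (a - b)) := by
        field_simp
      rw [hl]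
      linarith
  have hFc : ConvexOn ℝ Set.univ F := by
    refine ⟨convex_univ, fun x _ y _ a b ha hb hab => ?_⟩
    set z := a • x + b • y with hz
    have hfz : f z ≤ a * f x + b * f y := by
      have := hfc.2 (Set.mem_univ x) (Set.mem_univ y) ha hb hab
      simpa [smul_eq_mul] using this
    have hgz : g z = a * g x + b * g y := by
      simp only [hg, hz, inner_add_right, real_inner_smul_right]
      linear_combination cc * hab.symm
    have step1 : F z ≤ (1/2 : ℝ) * ((a * f x + b * f y) + g z +
        lam⁻¹ * η (lam * ((a * f x + b * f y) - g z))) := hmono (g z) hfz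
    have harg : lam * ((a * f x + b * f y) - g z) =
        a * (lam * (f x - g x)) + b * (lam * (f y - g y)) := by
      rw [hgz]; ring
    have hηineq : η (a * (lam * (f x - g x)) + b * (lam * (f y - g y))) ≤
        a * η (lam * (f x - g x)) + b * η (lam * (f y - g y)) := by
      have := hηconv.2 (Set.mem_univ (lam * (f x - g x))) (Set.mem_univ (lam * (f y - g y))) ha hb hab
      simpa [smul_eq_mul] using this
    have hlaminv : 0 < lam⁻¹ := inv_pos.mpr hlam
    have step2 : F z ≤ (1/2 : ℝ) * ((a * f x + b * f y) + (a * g x + b * g y) +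
        lam⁻¹ * (a * η (lam * (f x - g x)) + b * η (lam * (f y - g y)))) := by
      rw [harg] at step1
      have := mul_le_mul_of_nonneg_left hηineq (le_of_lt hlaminv)
      rw [hgz] at step1
      linarith
    have : a • F x + b • F y = (1/2 : ℝ) * ((a * f x + b * f y) + (a * g x + b * g y) +
        lam⁻¹ * (a * η (lam * (f x - g x)) + b * η (lam * (f y - g y)))) := by
      simp only [hF, smul_eq_mul]
      ring
    rw [this]
    exact step2
  -- gradient bound
  have hGbound : ∀ x, ‖G x‖ ≤ B + 1 := by
    intro x
    have h1 : ‖fderiv ℝ f x + innerSL ℝ v‖ ≤ B + 1 := by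
      calc ‖fderiv ℝ f x + innerSL ℝ v‖ ≤ ‖fderiv ℝ f x‖ + ‖innerSL ℝ v‖ := norm_add_le _ _
        _ ≤ B + 1 := by rw [innerSL_apply_norm, hv]; exact add_le_add_left (hB x) 1
    have h2 : ‖fderiv ℝ f x - innerSL ℝ v‖ ≤ B + 1 := by
      calc ‖fderiv ℝ f x - innerSL ℝ v‖ ≤ ‖fderiv ℝ f x‖ + ‖innerSL ℝ v‖ := norm_sub_le _ _
        _ ≤ B + 1 := by rw [innerSL_apply_norm, hv]; exact add_le_add_left (hB x) 1
    have h3 : ‖e x • (fderiv ℝ f x - innerSL ℝ v)‖ ≤ B + 1 := by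
      rw [norm_smul (e x) (fderiv ℝ f x - innerSL ℝ v), Real.norm_eq_abs]
      calc |e x| * ‖fderiv ℝ f x - innerSL ℝ v‖ ≤ 1 * (B + 1) :=
        mul_le_mul (hd1 _) h2 (norm_nonneg _) zero_le_one
        _ = B + 1 := one_mul _
    calc ‖G x‖ = (1/2 : ℝ) * ‖(fderiv ℝ f x + innerSL ℝ v) + e x • (fderiv ℝ f x - innerSL ℝ v)‖ := by
          rw [hG]; simp only []
          rw [norm_smul (1/2 : ℝ) (fderiv ℝ f x + innerSL ℝ v + e x • (fderiv ℝ f x - innerSL ℝ v)),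
            Real.norm_eq_abs]
          norm_num
      _ ≤ (1/2 : ℝ) * (‖fderiv ℝ f x + innerSL ℝ v‖ + ‖e x • (fderiv ℝ f x - innerSL ℝ v)‖) := by
          have := norm_add_le (fderiv ℝ f x + innerSL ℝ v) (e x • (fderiv ℝ f x - innerSL ℝ v))
          linarith
      _ ≤ B + 1 := by linarith
  -- second derivative
  have hη's : ContDiff ℝ (⊤ : ℕ∞) (deriv η) := eta_deriv_smooth hηs
  have hf's : ContDiff ℝ (⊤ : ℕ∞) (fderiv ℝ f) := hf.fderiv_right (by simp)
  have hHess : ∀ x, ‖fderiv ℝ (fderiv ℝ F) x‖ ≤ H + (1/2) * lam * M * (B+1)^2 := by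
    intro x
    have hDfx : HasFDerivAt f (fderiv ℝ f x) x := (hf.differentiable (by simp) x).hasFDerivAt
    have hgx : HasFDerivAt g (innerSL ℝ v) x := affine_hasFDerivAt v cc x
    have hwx : HasFDerivAt (fun y => f y - g y) (fderiv ℝ f x - innerSL ℝ v) x := hDfx.sub hgx
    have hlwx : HasFDerivAt (fun y => lam * (f y - g y))
        (lam • (fderiv ℝ f x - innerSL ℝ v)) x := hwx.const_mul lam
    have hDf2 : HasFDerivAt (fderiv ℝ f) (fderiv ℝ (fderiv ℝ f) x) x :=
      (hf's.differentiable (by simp) x).hasFDerivAt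
    have hex : HasFDerivAt e
        (deriv (deriv η) (lam * (f x - g x)) • (lam • (fderiv ℝ f x - innerSL ℝ v))) x :=
      ((hη's.differentiable (by simp) _).hasDerivAt).comp_hasFDerivAt x hlwx
    have hsub : HasFDerivAt (fun y => fderiv ℝ f y - innerSL ℝ v)
        (fderiv ℝ (fderiv ℝ f) x) x := hDf2.sub_const _
    have hsmul : HasFDerivAt (fun y => e y • (fderiv ℝ f y - innerSL ℝ v))
        (e x • (fderiv ℝ (fderiv ℝ f) x) +
          (deriv (deriv η) (lam * (f x - g x)) • (lam • (fderiv ℝ f x - innerSL ℝ v))).smulRight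
            (fderiv ℝ f x - innerSL ℝ v)) x := hex.smul hsub
    have haddc : HasFDerivAt (fun y => fderiv ℝ f y + innerSL ℝ v)
        (fderiv ℝ (fderiv ℝ f) x) x := hDf2.add_const _
    have hGx : HasFDerivAt G ((1/2 : ℝ) • (fderiv ℝ (fderiv ℝ f) x +
        (e x • (fderiv ℝ (fderiv ℝ f) x) +
          (deriv (deriv η) (lam * (f x - g x)) • (lam • (fderiv ℝ f x - innerSL ℝ v))).smulRight
            (fderiv ℝ f x - innerSL ℝ v)))) x := (haddc.add hsmul).const_smul (1/2 : ℝ)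
    rw [hDF, hGx.fderiv]
    have hdw : ‖fderiv ℝ f x - innerSL ℝ v‖ ≤ B + 1 := by
      calc ‖fderiv ℝ f x - innerSL ℝ v‖ ≤ ‖fderiv ℝ f x‖ + ‖innerSL ℝ v‖ := norm_sub_le _ _
        _ ≤ B + 1 := by rw [innerSL_apply_norm, hv]; exact add_le_add_left (hB x) 1
    have hterm1 : ‖e x • (fderiv ℝ (fderiv ℝ f) x)‖ ≤ H := by
      refine le_trans (ContinuousLinearMap.opNorm_smul_le (e x) (fderiv ℝ (fderiv ℝ f) x)) ?_; rw [Real.norm_eq_abs]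
      calc |e x| * ‖fderiv ℝ (fderiv ℝ f) x‖ ≤ 1 * H :=
        mul_le_mul (hd1 _) (hH x) (ContinuousLinearMap.opNorm_nonneg _) zero_le_one
        _ = H := one_mul _
    have hterm2 : ‖(deriv (deriv η) (lam * (f x - g x)) •
        (lam • (fderiv ℝ f x - innerSL ℝ v))).smulRight (fderiv ℝ f x - innerSL ℝ v)‖ ≤
        M * lam * (B+1)^2 := by
      rw [ContinuousLinearMap.norm_smulRight_apply, smul_smul,
        norm_smul (deriv (deriv η) (lam * (f x - g x)) * lam) (fderiv ℝ f x - innerSL ℝ v),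
        Real.norm_eq_abs, abs_mul, abs_of_pos hlam]
      have h1 : |deriv (deriv η) (lam * (f x - g x))| ≤ M := hMb _
      have h2 : ‖fderiv ℝ f x - innerSL ℝ v‖ ≤ B + 1 := hdw
      have h3 : (0:ℝ) ≤ ‖fderiv ℝ f x - innerSL ℝ v‖ := norm_nonneg _
      have h4 : (0:ℝ) ≤ |deriv (deriv η) (lam * (f x - g x))| := abs_nonneg _
      have e1 : |deriv (deriv η) (lam * (f x - g x))| * lam ≤ M * lam :=
        mul_le_mul_of_nonneg_right h1 hlam.le
      have e2 : ‖fderiv ℝ f x - innerSL ℝ v‖ * ‖fderiv ℝ f x - innerSL ℝ v‖ ≤ (B+1)*(B+1) :=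
        mul_le_mul h2 h2 h3 (by linarith)
      have e3 := mul_le_mul e1 e2 (by positivity) (by positivity : (0:ℝ) ≤ M * lam)
      nlinarith [e3]
    calc ‖(1/2 : ℝ) • (fderiv ℝ (fderiv ℝ f) x +
        (e x • (fderiv ℝ (fderiv ℝ f) x) +
          (deriv (deriv η) (lam * (f x - g x)) • (lam • (fderiv ℝ f x - innerSL ℝ v))).smulRight
            (fderiv ℝ f x - innerSL ℝ v)))‖
        ≤ (1/2 : ℝ) * (‖fderiv ℝ (fderiv ℝ f) x‖ +
            (‖e x • (fderiv ℝ (fderiv ℝ f) x)‖ +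
              ‖(deriv (deriv η) (lam * (f x - g x)) • (lam • (fderiv ℝ f x - innerSL ℝ v))).smulRight
                (fderiv ℝ f x - innerSL ℝ v)‖)) := by
          refine le_trans (ContinuousLinearMap.opNorm_smul_le (1/2 : ℝ) (fderiv ℝ (fderiv ℝ f) x +
            (e x • (fderiv ℝ (fderiv ℝ f) x) +
              (deriv (deriv η) (lam * (f x - g x)) • (lam • (fderiv ℝ f x - innerSL ℝ v))).smulRight
                (fderiv ℝ f x - innerSL ℝ v)))) ?_; rw [Real.norm_eq_abs]
          have := norm_add_le (fderiv ℝ (fderiv ℝ f) x)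
            (e x • (fderiv ℝ (fderiv ℝ f) x) +
              (deriv (deriv η) (lam * (f x - g x)) • (lam • (fderiv ℝ f x - innerSL ℝ v))).smulRight
                (fderiv ℝ f x - innerSL ℝ v))
          have h2 := norm_add_le (e x • (fderiv ℝ (fderiv ℝ f) x))
            ((deriv (deriv η) (lam * (f x - g x)) • (lam • (fderiv ℝ f x - innerSL ℝ v))).smulRight
                (fderiv ℝ f x - innerSL ℝ v))
          rw [abs_of_pos (by norm_num : (0:ℝ) < 1/2)]
          nlinarith [norm_nonneg (fderiv ℝ (fderiv ℝ f) x)]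
      _ ≤ H + (1/2) * lam * M * (B+1)^2 := by
          have := hH x
          nlinarith [hterm1, hterm2]
  exact ⟨hFs, hFc, fun x => by rw [hDF]; exact hGbound x, hHess⟩

end Step

theorem stmt_5 (n q : ℕ) (hn : 3 ≤ n) (hq : 1 ≤ q)
    (u : ℕ → EuclideanSpace ℝ (Fin n) → ℝ)
    (N : ℕ → EuclideanSpace ℝ (Fin n)) (c : ℕ → ℝ)
    (hN : ∀ k ≤ q, ‖N k‖ = 1)
    (hu : ∀ k ≤ q, ∀ x, u k x = ⟪N k, x⟫ + c k)
    (η : ℝ → ℝ) (hηsmooth : ContDiff ℝ (⊤ : ℕ∞) η)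
    (hηeven : ∀ t, η (-t) = η t)
    (hηconv : ∀ t, 0 ≤ iteratedDeriv 2 η t)
    (hηabs : ∀ t : ℝ, 1 / 2 ≤ |t| → η t = |t|) :
    ∃ C : ℝ, 0 < C ∧ ∀ γ : ℝ, 0 < γ → γ < 1 / 2 → ∀ lam0 : ℝ, 1 < lam0 →
      ∀ uh : ℕ → EuclideanSpace ℝ (Fin n) → ℝ,
      (∀ x, uh 0 x = u 0 x) →
      (∀ k < q, ∀ x, uh (k + 1) x =
        (1 / 2) * (uh k x + u (k + 1) x +
          (lam0 / γ ^ (k + 1))⁻¹ * η ((lam0 / γ ^ (k + 1)) * (uh k x - u (k + 1) x)))) →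
      ∀ k ≤ q,
        ContDiff ℝ (⊤ : ℕ∞) (uh k) ∧
        ConvexOn ℝ Set.univ (uh k) ∧
        (∀ x, ‖fderiv ℝ (uh k) x‖ ≤ C) ∧
        (∀ x, ‖iteratedFDeriv ℝ 2 (uh k) x‖ ≤ C * (lam0 / γ ^ k)) := by
  obtain ⟨M, hM0, hMb⟩ := eta_deriv2_bound hηsmooth hηeven hηabs
  have hd1 := eta_deriv_le_one hηsmooth hηeven hηconv hηabs
  have hd2 := eta_deriv2_nonneg hηconv
  have hCpos : (0:ℝ) < (M+1)*((q:ℝ)+2)^2 := by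
    have h1 : (0:ℝ) < M+1 := by linarith
    have h2 : (0:ℝ) < ((q:ℝ)+2)^2 := by positivity
    exact mul_pos h1 h2
  refine ⟨(M+1)*((q:ℝ)+2)^2, hCpos, ?_⟩
  intro γ hγ hγ2 lam0 hlam0 uh h0 hrec
  set C := (M+1)*((q:ℝ)+2)^2 with hC
  have hlam0' : (0:ℝ) < lam0 := by linarith
  have main : ∀ k, k ≤ q → ContDiff ℝ (⊤ : ℕ∞) (uh k) ∧ ConvexOn ℝ Set.univ (uh k) ∧
      (∀ x, ‖fderiv ℝ (uh k) x‖ ≤ (k:ℝ)+1) ∧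
      (∀ x, ‖fderiv ℝ (fderiv ℝ (uh k)) x‖ ≤ C * (lam0 / γ^k)) := by
    intro k
    induction k with
    | zero =>
      intro _
      have h00 : uh 0 = fun x => ⟪N 0, x⟫ + c 0 := by
        funext x; rw [h0 x, hu 0 (Nat.zero_le q) x]
      rw [h00]
      refine ⟨affine_contDiff _ _, ?_, ?_, ?_⟩
      · refine ⟨convex_univ, fun x _ y _ a b ha hb hab => le_of_eq ?_⟩
        simp only [smul_eq_mul, inner_add_right, real_inner_smul_right]
        linear_combination (c 0) * hab.symm
      · intro x
        rw [(affine_hasFDerivAt (N 0) (c 0) x).fderiv]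
        rw [innerSL_apply_norm, hN 0 (Nat.zero_le q)]
        push_cast; norm_num
      · intro x
        have hconst : fderiv ℝ (fun y : EuclideanSpace ℝ (Fin n) => ⟪N 0, y⟫ + c 0) =
            fun _ => innerSL ℝ (N 0) := funext fun y => (affine_hasFDerivAt (N 0) (c 0) y).fderiv
        rw [hconst]
        have : fderiv ℝ (fun _ : EuclideanSpace ℝ (Fin n) => innerSL ℝ (N 0)) x = 0 :=
          fderiv_const_apply _
        rw [this, ContinuousLinearMap.opNorm_zero, pow_zero]
        have : (0:ℝ) < C * (lam0 / 1) := by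
          rw [div_one]; exact mul_pos hCpos hlam0'
        linarith
    | succ k ih =>
      intro hk1
      have hkq : k ≤ q := Nat.le_of_succ_le hk1
      obtain ⟨hA, hBc, hGr, hHe⟩ := ih hkq
      set lam := lam0 / γ^(k+1) with hlamdef
      have hlam : 0 < lam := div_pos hlam0' (pow_pos hγ _)
      have hFr : uh (k+1) = fun x => (1/2:ℝ) * (uh k x + (⟪N (k+1), x⟫ + c (k+1)) +
          lam⁻¹ * η (lam * (uh k x - (⟪N (k+1), x⟫ + c (k+1))))) := by
        funext x
        rw [hrec k (Nat.lt_of_succ_le hk1) x, hu (k+1) hk1 x]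
      obtain ⟨sA, sB, sC, sD⟩ := step_lemma hηsmooth hd1 hd2 hM0 hMb (uh k) hA hBc
        (N (k+1)) (hN (k+1) hk1) (c (k+1)) hlam (B := (k:ℝ)+1) (by positivity) hGr
        (H := C * (lam0/γ^k)) hHe
      rw [hFr]
      refine ⟨sA, sB, ?_, ?_⟩
      · intro x
        have := sC x
        push_cast
        linarith
      · intro x
        refine le_trans (sD x) ?_
        have hγne : γ ≠ 0 := ne_of_gt hγ
        have hrel : lam0/γ^k = γ * lam := by
          rw [hlamdef]; field_simp; ring
        have hkle : (k:ℝ) ≤ (q:ℝ) := Nat.cast_le.mpr hkq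
        rw [hrel]
        have hkk : ((k:ℝ)+1+1)^2 ≤ ((q:ℝ)+2)^2 := by nlinarith
        have t1 : (1/2)*lam*M*(((k:ℝ)+1)+1)^2 ≤ (1/2)*lam*(M*((q:ℝ)+2)^2) := by
          nlinarith [hlam.le, mul_le_mul_of_nonneg_left hkk hM0]
        have t2 : M*((q:ℝ)+2)^2 ≤ C := by
          rw [hC]; nlinarith [sq_nonneg ((q:ℝ)+2)]
        have t3 : C*(γ*lam) ≤ (1/2)*(C*lam) := by
          nlinarith [mul_pos hCpos hlam]
        have t4 : (1/2)*lam*(M*((q:ℝ)+2)^2) ≤ (1/2)*lam*C :=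
          mul_le_mul_of_nonneg_left t2 (by positivity)
        linarith
  intro k hk
  obtain ⟨a, b, cgrad, d⟩ := main k hk
  have hkle : (k:ℝ) ≤ (q:ℝ) := Nat.cast_le.mpr hk
  refine ⟨a, b, fun x => le_trans (cgrad x) ?_, fun x => ?_⟩
  · rw [hC]; nlinarith [sq_nonneg ((q:ℝ)+2), hM0]
  · have e1 : ‖iteratedFDeriv ℝ 2 (uh k) x‖ = ‖iteratedFDeriv ℝ 1 (fderiv ℝ (uh k)) x‖ :=
      (norm_iteratedFDeriv_fderiv (n := 1)).symm
    have e2 : ‖iteratedFDeriv ℝ 1 (fderiv ℝ (uh k)) x‖ =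
        ‖iteratedFDeriv ℝ 0 (fderiv ℝ (fderiv ℝ (uh k))) x‖ :=
      (norm_iteratedFDeriv_fderiv (n := 0)).symm
    have e3 : ‖iteratedFDeriv ℝ 0 (fderiv ℝ (fderiv ℝ (uh k))) x‖ =
        ‖fderiv ℝ (fderiv ℝ (uh k)) x‖ := norm_iteratedFDeriv_zero
    rw [e1, e2, e3]
    exact d x
end

section
/- The hypersurface Σ̂ = {û_q = 0} is the union Σ̂ = ⋃_{0 ≤ k ≤ q} F_k ∪ ⋃_{0 ≤ j < k ≤ q} E_{j,k} ∪ ⋃_{0 ≤ i < j < k ≤ q} G_{i,j,k} of the sets F_k, E_{j,k}, G_{i,j,k} defined in the context. -/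
lemma eta_bounds (η : ℝ → ℝ) (hsm : ContDiff ℝ (⊤ : ℕ∞) η)
    (heven : ∀ t, η (-t) = η t)
    (hconv : ∀ t, 0 ≤ iteratedDeriv 2 η t)
    (habs : ∀ t : ℝ, 1 / 2 ≤ |t| → η t = |t|) :
    ∀ t, |t| ≤ η t ∧ η t ≤ |t| + 1 / 2 := by
  have hdiff : Differentiable ℝ η := hsm.differentiable (by simp)
  have hdiff2 : Differentiable ℝ (deriv η) := by
    have hsm' : ContDiff ℝ ((⊤ : ℕ∞) : WithTop ℕ∞) η := hsm.of_le (by simp)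
    rw [contDiff_infty_iff_deriv] at hsm'
    exact hsm'.2.differentiable (by simp)
  have hcvx : ConvexOn ℝ Set.univ η := by
    refine convexOn_univ_of_deriv2_nonneg hdiff hdiff2 fun x => ?_
    have := hconv x
    rwa [iteratedDeriv_eq_iterate] at this
  -- values at ±1/2, 3/2
  have hhalf : η (1/2) = 1/2 := by
    have := habs (1/2) (by rw [abs_of_nonneg]; norm_num); rwa [abs_of_nonneg (by norm_num)] at this
  have h32 : η (3/2) = 3/2 := by
    have := habs (3/2) (by rw [abs_of_nonneg] <;> norm_num); rwa [abs_of_nonneg (by norm_num)] at this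
  -- lower bound for 0 ≤ t
  have key_ge : ∀ t : ℝ, 0 ≤ t → t ≤ η t := by
    intro t ht
    rcases le_or_gt (1/2) t with h | h
    · rw [habs t (by rwa [abs_of_nonneg ht]), abs_of_nonneg ht]
    · have hθ : (0:ℝ) < 3/2 - t := by linarith
      have ha : (0:ℝ) ≤ (3/2 - t)⁻¹ := by positivity
      have hb : (0:ℝ) ≤ 1 - (3/2 - t)⁻¹ := by
        rw [sub_nonneg, inv_le_one_iff₀]; right; linarith
      have hab : ((3/2 - t)⁻¹ : ℝ) + (1 - (3/2 - t)⁻¹) = 1 := by ring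
      have := hcvx.2 (Set.mem_univ t) (Set.mem_univ ((3:ℝ)/2)) ha hb hab
      have hne : (3/2 - t : ℝ) ≠ 0 := ne_of_gt hθ
      have harg : (3/2 - t)⁻¹ • t + (1 - (3/2 - t)⁻¹) • (3/2 : ℝ) = 1/2 := by
        have h2 : ((3:ℝ)/2 - t)⁻¹ * (3/2 - t) = 1 := inv_mul_cancel₀ hne
        rw [smul_eq_mul, smul_eq_mul]; linear_combination (-1 : ℝ) * h2
      rw [harg, hhalf, h32, smul_eq_mul, smul_eq_mul] at this
      have h2 : (3/2 - t)⁻¹ * (3/2 - t) = 1 := inv_mul_cancel₀ (ne_of_gt hθ)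
      nlinarith [this, h2]
  have key_le : ∀ t : ℝ, 0 ≤ t → t ≤ 1/2 → η t ≤ 1/2 := by
    intro t ht ht2
    have hmhalf : η (-(1/2)) = 1/2 := by rw [heven]; exact hhalf
    have ha : (0:ℝ) ≤ 1/2 - t := by linarith
    have hb : (0:ℝ) ≤ 1/2 + t := by linarith
    have hab : (1/2 - t : ℝ) + (1/2 + t) = 1 := by ring
    have := hcvx.2 (Set.mem_univ (-(1/2):ℝ)) (Set.mem_univ ((1:ℝ)/2)) ha hb hab
    have harg : (1/2 - t) • (-(1/2):ℝ) + (1/2 + t) • (1/2:ℝ) = t := by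
      simp [smul_eq_mul]; ring
    rw [harg, hmhalf, hhalf, smul_eq_mul, smul_eq_mul] at this
    linarith
  intro t
  rcases le_or_gt 0 t with ht | ht
  · rw [abs_of_nonneg ht]
    refine ⟨key_ge t ht, ?_⟩
    rcases le_or_gt (1/2) t with h | h
    · rw [habs t (by rwa [abs_of_nonneg ht]), abs_of_nonneg ht]; linarith
    · have := key_le t ht (le_of_lt h); linarith
  · rw [abs_of_neg ht]
    have hnt : 0 ≤ -t := by linarith
    rw [← heven t]
    refine ⟨key_ge (-t) hnt, ?_⟩
    rcases le_or_gt (1/2) (-t) with h | h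
    · rw [habs (-t) (by rwa [abs_of_nonneg hnt]), abs_of_nonneg hnt]; linarith
    · have := key_le (-t) hnt (le_of_lt h); linarith

lemma step_bounds {η : ℝ → ℝ} (hη : ∀ t, |t| ≤ η t ∧ η t ≤ |t| + 1 / 2)
    (habs : ∀ t : ℝ, 1 / 2 ≤ |t| → η t = |t|)
    {lam a b v : ℝ} (hlam : 1 < lam)
    (hv : v = (1/2) * (a + b + lam⁻¹ * η (lam * (a - b)))) :
    (a ≤ v ∧ b ≤ v) ∧ (lam⁻¹ < a - b → v = a) ∧ (a - b < -lam⁻¹ → v = b) ∧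
      (|a - b| ≤ lam⁻¹ → v - 5/(4*lam) ≤ a ∧ v - 5/(4*lam) ≤ b) := by
  have h0 : (0:ℝ) < lam := by linarith
  have hinv : 0 < lam⁻¹ := by positivity
  have hmul : lam * lam⁻¹ = 1 := mul_inv_cancel₀ (ne_of_gt h0)
  obtain ⟨hge, hle⟩ := hη (lam * (a - b))
  have habsmul : |lam * (a - b)| = lam * |a - b| := by
    rw [abs_mul, abs_of_pos h0]
  rw [habsmul] at hge hle
  have hub : a ≤ v ∧ b ≤ v := by
    constructor
    · have h1 : lam * (a - b) ≤ lam * |a - b| := by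
        have := le_abs_self (a - b); nlinarith
      have h2 : a - b ≤ lam⁻¹ * η (lam * (a - b)) := by
        have h3 : lam * (a - b) ≤ η (lam * (a - b)) := le_trans h1 hge
        calc a - b = lam⁻¹ * (lam * (a - b)) := by field_simp
        _ ≤ lam⁻¹ * η (lam * (a - b)) := by nlinarith
      linarith [hv.ge, h2]
    · have h1 : lam * (b - a) ≤ lam * |a - b| := by
        have := neg_abs_le (a - b); nlinarith
      have h2 : b - a ≤ lam⁻¹ * η (lam * (a - b)) := by
        have h3 : lam * (b - a) ≤ η (lam * (a - b)) := le_trans h1 hge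
        calc b - a = lam⁻¹ * (lam * (b - a)) := by field_simp
        _ ≤ lam⁻¹ * η (lam * (a - b)) := by nlinarith
      linarith [hv.ge, h2]
  refine ⟨hub, ?_, ?_, ?_⟩
  · intro h
    have hpos : 0 < lam * (a - b) := by nlinarith
    have h1 : (1:ℝ)/2 ≤ |lam * (a - b)| := by
      rw [abs_of_pos hpos]; nlinarith
    have h2 : η (lam * (a - b)) = lam * (a - b) := by
      rw [habs _ h1, abs_of_pos hpos]
    rw [hv, h2]
    field_simp
    ring
  · intro h
    have hneg : lam * (a - b) < 0 := by nlinarith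
    have h1 : (1:ℝ)/2 ≤ |lam * (a - b)| := by
      rw [abs_of_neg hneg]; nlinarith
    have h2 : η (lam * (a - b)) = -(lam * (a - b)) := by
      rw [habs _ h1, abs_of_neg hneg]
    rw [hv, h2]
    field_simp
    ring
  · intro h
    have e1 : (1:ℝ)/(4*lam) = lam⁻¹/4 := by field_simp
    have e2 : (5:ℝ)/(4*lam) = 5*lam⁻¹/4 := by field_simp
    -- v ≤ max a b + 1/(4 lam), and min ≥ max - lam⁻¹
    have hvle : v ≤ (a + b + |a - b|) / 2 + 1/(4*lam) := by
      have h2 : lam⁻¹ * η (lam * (a - b)) ≤ lam⁻¹ * (lam * |a - b| + 1/2) := by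
        nlinarith
      have h3 : lam⁻¹ * (lam * |a - b| + 1/2) = |a - b| + lam⁻¹ / 2 := by
        field_simp
      have h4 : lam⁻¹ / 2 = 1 / (2 * lam) := by field_simp
      rw [h3, h4] at h2
      have h5 : 1 / (2*lam) ≤ 1/(2*lam) := le_refl _
      rw [hv]
      have h6 : (1:ℝ)/(2*lam) = 2 * (1/(4*lam)) := by field_simp; ring
      linarith [h2]
    rw [e1] at hvle
    rw [e2]
    rcases le_or_gt a b with hab | hab
    · rw [abs_of_nonpos (by linarith : a - b ≤ 0)] at hvle h
      constructor
      · linarith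
      · linarith
    · rw [abs_of_pos (by linarith : 0 < a - b)] at hvle h
      constructor
      · linarith
      · linarith

open scoped RealInnerProductSpace

theorem stmt_11 (n q : ℕ) (hn : 3 ≤ n) (hq : 1 ≤ q)
    (u : ℕ → EuclideanSpace ℝ (Fin n) → ℝ)
    (N : ℕ → EuclideanSpace ℝ (Fin n)) (c : ℕ → ℝ)
    (hN : ∀ k ≤ q, ‖N k‖ = 1)
    (hu : ∀ k ≤ q, ∀ x, u k x = ⟪N k, x⟫ + c k)
    (η : ℝ → ℝ) (hηsmooth : ContDiff ℝ (⊤ : ℕ∞) η)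
    (hηeven : ∀ t, η (-t) = η t)
    (hηconv : ∀ t, 0 ≤ iteratedDeriv 2 η t)
    (hηabs : ∀ t : ℝ, 1 / 2 ≤ |t| → η t = |t|)
    (γ lam0 : ℝ) (hγ0 : 0 < γ) (hγ : γ < 1 / 2) (hlam0 : 1 < lam0)
    (uh : ℕ → EuclideanSpace ℝ (Fin n) → ℝ)
    (huh0 : ∀ x, uh 0 x = u 0 x)
    (huhrec : ∀ k < q, ∀ x, uh (k + 1) x =
      (1 / 2) * (uh k x + u (k + 1) x +
        (lam0 / γ ^ (k + 1))⁻¹ * η ((lam0 / γ ^ (k + 1)) * (uh k x - u (k + 1) x)))) :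
    ∀ x, uh q x = 0 ↔
      -- x ∈ F_0
      ((uh q x = 0 ∧
        (∀ m, 1 ≤ m → m ≤ q → (lam0 / γ ^ m)⁻¹ < uh (m - 1) x - u m x)) ∨
      -- x ∈ F_k for some 1 ≤ k ≤ q
      (∃ k, 1 ≤ k ∧ k ≤ q ∧ uh q x = 0 ∧
        (∀ m, k + 1 ≤ m → m ≤ q → (lam0 / γ ^ m)⁻¹ < uh (m - 1) x - u m x) ∧
        uh (k - 1) x - u k x < -(lam0 / γ ^ k)⁻¹) ∨
      -- x ∈ E_{0,k} for some 1 ≤ k ≤ q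
      (∃ k, 1 ≤ k ∧ k ≤ q ∧ uh q x = 0 ∧
        (∀ m, k + 1 ≤ m → m ≤ q → (lam0 / γ ^ m)⁻¹ < uh (m - 1) x - u m x) ∧
        (∀ m, 1 ≤ m → m ≤ k - 1 → (lam0 / γ ^ m)⁻¹ < uh (m - 1) x - u m x) ∧
        -2 * (lam0 / γ ^ k)⁻¹ ≤ uh (k - 1) x ∧ uh (k - 1) x ≤ 0 ∧
        -2 * (lam0 / γ ^ k)⁻¹ ≤ u k x ∧ u k x ≤ 0 ∧
        -2 * (lam0 / γ ^ k)⁻¹ ≤ u 0 x ∧ u 0 x ≤ 0) ∨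
      -- x ∈ E_{j,k} for some 1 ≤ j < k ≤ q
      (∃ j k, 1 ≤ j ∧ j < k ∧ k ≤ q ∧ uh q x = 0 ∧
        (∀ m, k + 1 ≤ m → m ≤ q → (lam0 / γ ^ m)⁻¹ < uh (m - 1) x - u m x) ∧
        (∀ m, j + 1 ≤ m → m ≤ k - 1 → (lam0 / γ ^ m)⁻¹ < uh (m - 1) x - u m x) ∧
        -2 * (lam0 / γ ^ k)⁻¹ ≤ uh (k - 1) x ∧ uh (k - 1) x ≤ 0 ∧
        -2 * (lam0 / γ ^ k)⁻¹ ≤ u k x ∧ u k x ≤ 0 ∧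
        -2 * (lam0 / γ ^ k)⁻¹ ≤ u j x ∧ u j x ≤ 0 ∧
        uh (j - 1) x - u j x < -(lam0 / γ ^ j)⁻¹) ∨
      -- x ∈ G_{i,j,k} for some 0 ≤ i < j < k ≤ q
      (∃ i j k, i < j ∧ j < k ∧ k ≤ q ∧ uh q x = 0 ∧
        (∀ m, k + 1 ≤ m → m ≤ q → (lam0 / γ ^ m)⁻¹ < uh (m - 1) x - u m x) ∧
        (∀ m, j + 1 ≤ m → m ≤ k - 1 → (lam0 / γ ^ m)⁻¹ < uh (m - 1) x - u m x) ∧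
        -2 * (lam0 / γ ^ k)⁻¹ ≤ uh (k - 1) x ∧ uh (k - 1) x ≤ 0 ∧
        -2 * (lam0 / γ ^ k)⁻¹ ≤ u k x ∧ u k x ≤ 0 ∧
        -4 * (lam0 / γ ^ j)⁻¹ ≤ u j x ∧ u j x ≤ 0 ∧
        -6 * (lam0 / γ ^ i)⁻¹ ≤ u i x ∧ u i x ≤ 0)) := by
  intro x
  have hγ1 : γ < 1 := by linarith
  have hlamgt : ∀ m : ℕ, 1 < lam0 / γ ^ m := by
    intro m
    have h1 : γ ^ m ≤ 1 := pow_le_one₀ (le_of_lt hγ0) (by linarith)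
    have h2 : 0 < γ ^ m := pow_pos hγ0 m
    rw [lt_div_iff₀ h2]; nlinarith
  have hLpos : ∀ m : ℕ, 0 < (lam0 / γ ^ m)⁻¹ := by
    intro m; have := hlamgt m; positivity
  have hlam0pos : (0:ℝ) < lam0 := by linarith
  have hLmono : ∀ a b : ℕ, a ≤ b → (lam0 / γ ^ b)⁻¹ ≤ (lam0 / γ ^ a)⁻¹ := by
    intro a b hab
    rw [inv_div, inv_div]
    have h1 : γ ^ b ≤ γ ^ a := pow_le_pow_of_le_one (le_of_lt hγ0) (le_of_lt hγ1) hab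
    gcongr
  have h54 : ∀ m : ℕ, 5 / (4 * (lam0 / γ ^ m)) = (5 / 4) * (lam0 / γ ^ m)⁻¹ := by
    intro m
    have h1 : lam0 / γ ^ m ≠ 0 := by have := hlamgt m; linarith
    field_simp
  have hηb := eta_bounds η hηsmooth hηeven hηconv hηabs
  have hstep : ∀ m, 1 ≤ m → m ≤ q →
      ((uh (m - 1) x ≤ uh m x ∧ u m x ≤ uh m x) ∧
        ((lam0 / γ ^ m)⁻¹ < uh (m - 1) x - u m x → uh m x = uh (m - 1) x) ∧
        (uh (m - 1) x - u m x < -(lam0 / γ ^ m)⁻¹ → uh m x = u m x) ∧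
        (|uh (m - 1) x - u m x| ≤ (lam0 / γ ^ m)⁻¹ →
          uh m x - 5 / (4 * (lam0 / γ ^ m)) ≤ uh (m - 1) x ∧
          uh m x - 5 / (4 * (lam0 / γ ^ m)) ≤ u m x)) := by
    intro m h1 h2
    obtain ⟨m', rfl⟩ : ∃ m', m = m' + 1 := ⟨m - 1, by omega⟩
    have hrec := huhrec m' (by omega) x
    simp only [Nat.add_sub_cancel]
    exact step_bounds hηb hηabs (hlamgt (m' + 1)) hrec
  have hchain : ∀ b : ℕ, b ≤ q → ∀ a : ℕ, a ≤ b →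
      (∀ m, a + 1 ≤ m → m ≤ b → (lam0 / γ ^ m)⁻¹ < uh (m - 1) x - u m x) →
      uh a x = uh b x := by
    intro b
    induction b with
    | zero =>
      intro _ a ha _
      have : a = 0 := by omega
      subst this; rfl
    | succ b ih =>
      intro hb a ha hch
      rcases Nat.lt_or_ge a (b + 1) with h | h
      · have h1 : uh a x = uh b x :=
          ih (by omega) a (by omega) (fun m hm1 hm2 => hch m hm1 (by omega))
        have h2 := (hstep (b + 1) (by omega) hb).2.1 (hch (b + 1) (by omega) (le_refl _))
        simp only [Nat.add_sub_cancel] at h2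
        exact h1.trans h2.symm
      · have : a = b + 1 := by omega
        subst this; rfl
  have hfind : ∀ b : ℕ, b ≤ q →
      (∀ m, 1 ≤ m → m ≤ b → (lam0 / γ ^ m)⁻¹ < uh (m - 1) x - u m x) ∨
      (∃ j, 1 ≤ j ∧ j ≤ b ∧ ¬((lam0 / γ ^ j)⁻¹ < uh (j - 1) x - u j x) ∧
        ∀ m, j + 1 ≤ m → m ≤ b → (lam0 / γ ^ m)⁻¹ < uh (m - 1) x - u m x) := by
    intro b
    induction b with
    | zero => intro _; left; intro m h1 h2; omega
    | succ b ih =>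
      intro hb
      by_cases hP : (lam0 / γ ^ (b + 1))⁻¹ < uh (b + 1 - 1) x - u (b + 1) x
      · rcases ih (by omega) with h | ⟨j, hj1, hj2, hj3, hj4⟩
        · left; intro m hm1 hm2
          rcases Nat.lt_or_ge m (b + 1) with h' | h'
          · exact h m hm1 (by omega)
          · have : m = b + 1 := by omega
            subst this; exact hP
        · right
          refine ⟨j, hj1, by omega, hj3, fun m hm1 hm2 => ?_⟩
          rcases Nat.lt_or_ge m (b + 1) with h' | h'
          · exact hj4 m hm1 (by omega)
          · have : m = b + 1 := by omega
            subst this; exact hP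
      · right
        exact ⟨b + 1, by omega, le_refl _, hP, fun m hm1 hm2 => by omega⟩
  constructor
  · intro hx
    rcases hfind q (le_refl q) with hall | ⟨k, hk1, hk2, hk3, hk4⟩
    · exact Or.inl ⟨hx, hall⟩
    · have huhk : uh k x = 0 := (hchain q (le_refl q) k hk2 hk4).trans hx
      push_neg at hk3
      rcases lt_or_ge (uh (k - 1) x - u k x) (-(lam0 / γ ^ k)⁻¹) with hneg | hmid
      · exact Or.inr (Or.inl ⟨k, hk1, hk2, hx, hk4, hneg⟩)
      · have habsk : |uh (k - 1) x - u k x| ≤ (lam0 / γ ^ k)⁻¹ := abs_le.mpr ⟨hmid, hk3⟩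
        have hs := hstep k hk1 hk2
        have hbd := hs.2.2.2 habsk
        rw [huhk, h54 k] at hbd
        have hup1 : uh (k - 1) x ≤ 0 := huhk ▸ hs.1.1
        have hup2 : u k x ≤ 0 := huhk ▸ hs.1.2
        have hLk := hLpos k
        have hlo1 : -2 * (lam0 / γ ^ k)⁻¹ ≤ uh (k - 1) x := by linarith [hbd.1]
        have hlo2 : -2 * (lam0 / γ ^ k)⁻¹ ≤ u k x := by linarith [hbd.2]
        rcases hfind (k - 1) (by omega) with hall2 | ⟨j, hj1, hj2, hj3, hj4⟩
        · have hu0 : u 0 x = uh (k - 1) x :=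
            (huh0 x).symm.trans (hchain (k - 1) (by omega) 0 (by omega) hall2)
          exact Or.inr (Or.inr (Or.inl ⟨k, hk1, hk2, hx, hk4, hall2, hlo1, hup1, hlo2,
            hup2, hu0 ▸ hlo1, hu0 ▸ hup1⟩))
        · have hjq : j ≤ q := by omega
          have hjk : uh j x = uh (k - 1) x := hchain (k - 1) (by omega) j hj2 hj4
          push_neg at hj3
          have hjltk : j < k := by omega
          have hLjk : (lam0 / γ ^ k)⁻¹ ≤ (lam0 / γ ^ j)⁻¹ := hLmono j k (le_of_lt hjltk)
          have hLj := hLpos j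
          have hsj := hstep j hj1 hjq
          rcases lt_or_ge (uh (j - 1) x - u j x) (-(lam0 / γ ^ j)⁻¹) with hneg2 | hmid2
          · have huj : u j x = uh (k - 1) x := (hsj.2.2.1 hneg2).symm.trans hjk
            exact Or.inr (Or.inr (Or.inr (Or.inl ⟨j, k, hj1, hjltk, hk2, hx, hk4, hj4,
              hlo1, hup1, hlo2, hup2, huj ▸ hlo1, huj ▸ hup1, hneg2⟩)))
          · have habsj : |uh (j - 1) x - u j x| ≤ (lam0 / γ ^ j)⁻¹ := abs_le.mpr ⟨hmid2, hj3⟩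
            have hbdj := hsj.2.2.2 habsj
            rw [hjk, h54 j] at hbdj
            have hupj1 : uh (j - 1) x ≤ 0 := by
              have := hsj.1.1; rw [hjk] at this; linarith
            have hupj2 : u j x ≤ 0 := by
              have := hsj.1.2; rw [hjk] at this; linarith
            have hloj1 : -4 * (lam0 / γ ^ j)⁻¹ ≤ uh (j - 1) x := by linarith [hbdj.1]
            have hloj2 : -4 * (lam0 / γ ^ j)⁻¹ ≤ u j x := by linarith [hbdj.2]
            rcases hfind (j - 1) (by omega) with hall3 | ⟨i, hi1, hi2, hi3, hi4⟩
            · have hu0j : u 0 x = uh (j - 1) x :=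
                (huh0 x).symm.trans (hchain (j - 1) (by omega) 0 (by omega) hall3)
              have hL0j : (lam0 / γ ^ j)⁻¹ ≤ (lam0 / γ ^ 0)⁻¹ := hLmono 0 j (by omega)
              refine Or.inr (Or.inr (Or.inr (Or.inr ⟨0, j, k, by omega, hjltk, hk2, hx,
                hk4, hj4, hlo1, hup1, hlo2, hup2, hloj2, hupj2, ?_, hu0j ▸ hupj1⟩)))
              rw [hu0j]; linarith
            · have hiq : i ≤ q := by omega
              have hij : uh i x = uh (j - 1) x := hchain (j - 1) (by omega) i hi2 hi4
              push_neg at hi3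
              have hiltj : i < j := by omega
              have hLij : (lam0 / γ ^ j)⁻¹ ≤ (lam0 / γ ^ i)⁻¹ := hLmono i j (le_of_lt hiltj)
              have hLi := hLpos i
              have hsi := hstep i hi1 hiq
              have huhix : -4 * (lam0 / γ ^ i)⁻¹ ≤ uh i x ∧ uh i x ≤ 0 := by
                rw [hij]; constructor <;> linarith
              rcases lt_or_ge (uh (i - 1) x - u i x) (-(lam0 / γ ^ i)⁻¹) with hneg3 | hmid3
              · have hui : u i x = uh i x := (hsi.2.2.1 hneg3).symm
                refine Or.inr (Or.inr (Or.inr (Or.inr ⟨i, j, k, hiltj, hjltk, hk2, hx,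
                  hk4, hj4, hlo1, hup1, hlo2, hup2, hloj2, hupj2, ?_, ?_⟩)))
                · rw [hui]; linarith [huhix.1]
                · rw [hui]; exact huhix.2
              · have habsi : |uh (i - 1) x - u i x| ≤ (lam0 / γ ^ i)⁻¹ :=
                  abs_le.mpr ⟨hmid3, hi3⟩
                have hbdi := hsi.2.2.2 habsi
                rw [h54 i] at hbdi
                refine Or.inr (Or.inr (Or.inr (Or.inr ⟨i, j, k, hiltj, hjltk, hk2, hx,
                  hk4, hj4, hlo1, hup1, hlo2, hup2, hloj2, hupj2, ?_, ?_⟩)))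
                · linarith [hbdi.2, huhix.1]
                · linarith [hsi.1.2, huhix.2]
  · rintro (⟨h0, -⟩ | ⟨k, -, -, h0, -⟩ | ⟨k, -, -, h0, -⟩ | ⟨j, k, -, -, -, h0, -⟩ |
      ⟨i, j, k, -, -, -, h0, -⟩) <;> exact h0
end

section
/- Let α ∈ (0, π/2) and β ∈ [0, α]. Then for every θ ∈ (0,1), sin(2β)/sin(2α) − sin(2θβ)/sin(2θα) ≥ 0. -/
/-! The function `t ↦ sin (θ t) / sin t` is monotone on `(0, π)` for `0 ≤ θ ≤ 1`: the numerator
of its derivative, `θ cos (θ t) sin t - sin (θ t) cos t`, vanishes at `0` and has derivative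
`(1 - θ²) sin (θ t) sin t ≥ 0` on `[0, π]`. Comparing this ratio at `2β ≤ 2α < π` and
rearranging the two fractions gives the inequality. -/

open Real Set

theorem hasDerivAt_mul_cos_mul_mul_sin_sub_sin_mul_mul_cos (θ t : ℝ) :
    HasDerivAt (fun t => θ * cos (θ * t) * sin t - sin (θ * t) * cos t)
      ((1 - θ ^ 2) * (sin (θ * t) * sin t)) t := by
  have hθt : HasDerivAt (fun t => θ * t) θ t := by simpa using (hasDerivAt_id t).const_mul θ
  exact (((hθt.cos.const_mul θ).mul (hasDerivAt_sin t)).sub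
    (hθt.sin.mul (hasDerivAt_cos t))).congr_deriv (by ring)

theorem hasDerivAt_sin_mul_div_sin {θ t : ℝ} (ht : sin t ≠ 0) :
    HasDerivAt (fun t => sin (θ * t) / sin t)
      ((θ * cos (θ * t) * sin t - sin (θ * t) * cos t) / sin t ^ 2) t := by
  have hθt : HasDerivAt (fun t => θ * t) θ t := by simpa using (hasDerivAt_id t).const_mul θ
  exact (hθt.sin.div (hasDerivAt_sin t) ht).congr_deriv (by ring)

theorem sin_mul_mul_cos_le {θ t : ℝ} (hθ0 : 0 ≤ θ) (hθ1 : θ ≤ 1) (ht : t ∈ Icc 0 π) :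
    sin (θ * t) * cos t ≤ θ * cos (θ * t) * sin t := by
  have hmono : MonotoneOn (fun t => θ * cos (θ * t) * sin t - sin (θ * t) * cos t) (Icc 0 π) := by
    refine monotoneOn_of_hasDerivWithinAt_nonneg (convex_Icc 0 π) (by fun_prop)
      (fun s _ => (hasDerivAt_mul_cos_mul_mul_sin_sub_sin_mul_mul_cos θ s).hasDerivWithinAt) ?_
    intro s hs
    rw [interior_Icc] at hs
    have hsin : 0 < sin s := sin_pos_of_pos_of_lt_pi hs.1 hs.2
    have hsinθ : 0 ≤ sin (θ * s) :=
      sin_nonneg_of_nonneg_of_le_pi (by nlinarith [hs.1]) (by nlinarith [hs.1, hs.2])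
    exact mul_nonneg (by nlinarith) (by positivity)
  simpa using hmono ⟨le_rfl, pi_pos.le⟩ ht ht.1

theorem monotoneOn_sin_mul_div_sin {θ : ℝ} (hθ0 : 0 ≤ θ) (hθ1 : θ ≤ 1) :
    MonotoneOn (fun t => sin (θ * t) / sin t) (Ioo 0 π) := by
  have hsin : ∀ t ∈ Ioo 0 π, sin t ≠ 0 := fun t ht => (sin_pos_of_pos_of_lt_pi ht.1 ht.2).ne'
  refine monotoneOn_of_hasDerivWithinAt_nonneg (convex_Ioo 0 π)
    (fun t ht => (hasDerivAt_sin_mul_div_sin (hsin t ht)).continuousAt.continuousWithinAt)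
    (fun t ht => (hasDerivAt_sin_mul_div_sin (hsin t (interior_subset ht))).hasDerivWithinAt) ?_
  intro t ht
  rw [interior_Ioo] at ht
  exact div_nonneg (sub_nonneg.mpr (sin_mul_mul_cos_le hθ0 hθ1 (Ioo_subset_Icc_self ht)))
    (sq_nonneg _)

theorem stmt_16_general (α β θ : ℝ) (hα : α < π / 2)
    (hβ0 : 0 ≤ β) (hβ : β ≤ α) (hθ0 : 0 < θ) (hθ1 : θ < 1) :
    0 ≤ Real.sin (2 * β) / Real.sin (2 * α) -
        Real.sin (2 * θ * β) / Real.sin (2 * θ * α) := by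
  obtain rfl | hβ0 := hβ0.eq_or_lt
  · simp
  have h2β : 2 * β ∈ Ioo 0 π := ⟨by linarith, by linarith⟩
  have h2α : 2 * α ∈ Ioo 0 π := ⟨by linarith, by linarith⟩
  have hsinβ : 0 < sin (2 * β) := sin_pos_of_pos_of_lt_pi h2β.1 h2β.2
  have hsinα : 0 < sin (2 * α) := sin_pos_of_pos_of_lt_pi h2α.1 h2α.2
  have hsinθα : 0 < sin (2 * θ * α) := sin_pos_of_pos_of_lt_pi
    (mul_pos (by positivity) (by linarith)) (by nlinarith [mul_lt_mul_of_pos_right hθ1 h2α.1])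
  have key := monotoneOn_sin_mul_div_sin hθ0.le hθ1.le h2β h2α (by linarith)
  simp only [div_le_div_iff₀ hsinβ hsinα, ← mul_assoc, mul_comm θ 2] at key
  rw [sub_nonneg, div_le_div_iff₀ hsinθα hsinα]
  linarith

theorem stmt_16 (α β θ : ℝ) (hα0 : 0 < α) (hα : α < π / 2)
    (hβ0 : 0 ≤ β) (hβ : β ≤ α) (hθ0 : 0 < θ) (hθ1 : θ < 1) :
    0 ≤ Real.sin (2 * β) / Real.sin (2 * α) -
        Real.sin (2 * θ * β) / Real.sin (2 * θ * α) :=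
  stmt_16_general α β θ hα hβ0 hβ hθ0 hθ1
end

section
/- Let α ∈ (0, π/2) and β ∈ [0, α]. Then for every θ ∈ [1, π/(2α)), |sin(2β)/sin(2α) − sin(2θβ)/sin(2θα)| ≤ 4(θ−1)α / (sin(2α) sin(2θα)). -/
/-!
Clearing denominators, the claim bounds `sin 2β sin 2θα - sin 2α sin 2θβ`. By the product-to-sum
formula this is half a sum of two differences of cosines, and since `cos` is 1-Lipschitz these are
at most `2(θ - 1)(α + β)` and `2(θ - 1)(α - β)`, giving even the bound `2(θ - 1)α`.
-/

open Real

theorem abs_sin_mul_sin_sub_sin_mul_sin_le (a b c d : ℝ) :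
    |sin a * sin d - sin b * sin c| ≤ (|(a - d) - (c - b)| + |(a + d) - (c + b)|) / 2 := by
  have h₁ := abs_cos_sub_cos_le (a - d) (c - b)
  have h₂ := abs_cos_sub_cos_le (c + b) (a + d)
  have h : sin a * sin d - sin b * sin c =
      ((cos (a - d) - cos (c - b)) + (cos (c + b) - cos (a + d))) / 2 := by
    linear_combination (two_mul_sin_mul_sin a d - two_mul_sin_mul_sin c b) / 2
  rw [h, abs_div, abs_two, abs_sub_comm (a + d)]
  gcongr
  exact (abs_add_le _ _).trans (add_le_add h₁ h₂)

theorem stmt_17 (α β θ : ℝ) (hα0 : 0 < α) (hα : α < π / 2)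
    (hβ0 : 0 ≤ β) (hβ : β ≤ α) (hθ1 : 1 ≤ θ) (hθ : θ < π / (2 * α)) :
    |Real.sin (2 * β) / Real.sin (2 * α) -
        Real.sin (2 * θ * β) / Real.sin (2 * θ * α)| ≤
      4 * (θ - 1) * α / (Real.sin (2 * α) * Real.sin (2 * θ * α)) := by
  have hθα : 2 * θ * α < π := by
    rw [lt_div_iff₀ (by positivity)] at hθ
    linarith
  have hs : 0 < sin (2 * α) := sin_pos_of_pos_of_lt_pi (by positivity) (by linarith)
  have ht : 0 < sin (2 * θ * α) := sin_pos_of_pos_of_lt_pi (by positivity) hθα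
  have key : |sin (2 * β) * sin (2 * θ * α) - sin (2 * α) * sin (2 * θ * β)| ≤
      4 * (θ - 1) * α := by
    refine (abs_sin_mul_sin_sub_sin_mul_sin_le _ _ _ _).trans ?_
    rw [show 2 * β - 2 * θ * α - (2 * θ * β - 2 * α) = -(2 * (θ - 1) * (α + β)) by ring,
      show 2 * β + 2 * θ * α - (2 * θ * β + 2 * α) = 2 * (θ - 1) * (α - β) by ring,
      abs_neg, abs_of_nonneg (by nlinarith), abs_of_nonneg (by nlinarith)]
    nlinarith
  rw [div_sub_div _ _ hs.ne' ht.ne', abs_div, abs_of_pos (mul_pos hs ht)]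
  exact div_le_div_of_nonneg_right key (mul_pos hs ht).le
end
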